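/- arXiv:1910.08935 — 2 statements merged into one kernel-verified Lean document; each statement's English description precedes it below -/
import Mathlib

section
/- For every natural number n, the function ψ_n : ℝ → ℂ defined by ψ_n(y) = (2^n n!)^{-1/2} (√2 π)^{-1/4} H_n(y/2^{1/4}) e^{-y²/(2√2)} is smooth and satisfies the eigenvalue equation -ψ_n''(y) + (y²/2) ψ_n(y) = √2 (n + 1/2) ψ_n(y) for all y ∈ ℝ; moreover the family (ψ_n)_{n∈ℕ} is orthonormal in L²(ℝ, ℂ). -/
open MeasureTheory

noncomputable section

/-- Physicists' Hermite polynomial `H n x = (-1)^n e^{x²} (d/dx)^n e^{-x²}`. -/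
def hermiteH (n : ℕ) (x : ℝ) : ℝ :=
  (-1 : ℝ) ^ n * Real.exp (x ^ 2) * iteratedDeriv n (fun y => Real.exp (-y ^ 2)) x

/-- The n-th eigenfunction of the one-dimensional oscillator Hamiltonian
`-d²/dy² + y²/2`:  `ψ_n(y) = (2^n n!)^{-1/2} (√2 π)^{-1/4} H_n(y/2^{1/4}) e^{-y²/(2√2)}`. -/
def oscEigenfun (n : ℕ) (y : ℝ) : ℂ :=
  (((Real.sqrt (2 ^ n * n.factorial))⁻¹ * (Real.sqrt 2 * Real.pi) ^ (-(1/4 : ℝ)) *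
      hermiteH n (y / (2 : ℝ) ^ ((1 : ℝ)/4)) *
      Real.exp (-(y ^ 2 / (2 * Real.sqrt 2))) : ℝ) : ℂ)

section Aux
open Polynomial Filter




lemma hermite_deriv (n : ℕ) :
    derivative (hermite (n+1)) = C ((n:ℤ)+1) * hermite n := by
  induction n with
  | zero => simp [hermite_one, hermite_zero]
  | succ n ih =>
      rw [hermite_succ (n+1), derivative_sub, derivative_mul, derivative_X, ih,
        derivative_mul, derivative_C, hermite_succ n]
      push_cast
      simp only [C_add, C_1]
      ring

lemma hermite_ode (n : ℕ) :
    X * derivative (hermite n) - derivative (derivative (hermite n))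
      = C (n:ℤ) * hermite n := by
  cases n with
  | zero => simp [hermite_zero]
  | succ n =>
      rw [hermite_deriv n, derivative_mul, derivative_C, hermite_succ n]
      push_cast
      simp only [C_add, C_1]
      ring

lemma hermite_ode_real (n : ℕ) (t : ℝ) :
    t * aeval t (derivative (hermite n)) - aeval t (derivative (derivative (hermite n)))
      = (n:ℝ) * aeval t (hermite n) := by
  have h := congrArg (aeval (R := ℤ) t) (hermite_ode n)
  simpa [aeval_C] using h





lemma deriv_iter_gauss (n : ℕ) (x : ℝ) :
    deriv^[n] (fun y => Real.exp (-y ^ 2)) x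
      = (-1 : ℝ) ^ n * (Real.sqrt 2) ^ n * aeval (Real.sqrt 2 * x) (hermite n)
          * Real.exp (-x ^ 2) := by
  induction n generalizing x with
  | zero => simp [hermite_zero]
  | succ n ih =>
      have ih' : deriv^[n] (fun y => Real.exp (-y ^ 2))
          = fun x => (-1 : ℝ) ^ n * (Real.sqrt 2) ^ n
              * (aeval (Real.sqrt 2 * x) (hermite n) * Real.exp (-x ^ 2)) := by
        funext z; rw [ih z]; ring
      rw [Function.iterate_succ_apply', ih']
      have hP : HasDerivAt (fun x : ℝ => aeval (Real.sqrt 2 * x) (hermite n))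
          (aeval (Real.sqrt 2 * x) (derivative (hermite n)) * Real.sqrt 2) x := by
        have h1 : HasDerivAt (fun x : ℝ => Real.sqrt 2 * x) (Real.sqrt 2) x := by
          simpa using (hasDerivAt_id x).const_mul (Real.sqrt 2)
        exact (Polynomial.hasDerivAt_aeval (q := hermite n) (Real.sqrt 2 * x)).comp x h1
      have hE : HasDerivAt (fun x : ℝ => Real.exp (-x ^ 2))
          (-(2 * x) * Real.exp (-x ^ 2)) x := by
        have := ((hasDerivAt_pow 2 x).fun_neg).exp
        convert this using 1
        simp; ring
      have h := ((hP.fun_mul hE).const_mul ((-1 : ℝ) ^ n * (Real.sqrt 2) ^ n))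
      rw [h.deriv]
      rw [hermite_succ, map_sub, map_mul, aeval_X]
      have hs : Real.sqrt 2 * Real.sqrt 2 = 2 := Real.mul_self_sqrt (by norm_num)
      linear_combination ((-1:ℝ)^n * (Real.sqrt 2)^n * x
        * aeval (Real.sqrt 2 * x) (hermite n) * Real.exp (-x^2)) * hs

lemma hermiteH_eq (n : ℕ) (x : ℝ) :
    hermiteH n x = (Real.sqrt 2) ^ n * aeval (Real.sqrt 2 * x) (hermite n) := by
  rw [hermiteH, iteratedDeriv_eq_iterate, deriv_iter_gauss]
  have h1 : Real.exp (x^2) * Real.exp (-x^2) = 1 := by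
    rw [← Real.exp_add]; norm_num
  have h2 : ((-1:ℝ)^n)*((-1:ℝ)^n) = 1 := by
    rw [← pow_add]; exact (neg_one_pow_eq_one_iff_even (by norm_num)).2 ⟨n, by ring⟩
  calc (-1:ℝ) ^ n * Real.exp (x ^ 2) * ((-1) ^ n * (Real.sqrt 2) ^ n
        * aeval (Real.sqrt 2 * x) (hermite n) * Real.exp (-x ^ 2))
      = (((-1:ℝ)^n * (-1:ℝ)^n) * ((Real.sqrt 2) ^ n * aeval (Real.sqrt 2 * x) (hermite n)))
          * (Real.exp (x^2) * Real.exp (-x^2)) := by ring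
    _ = (Real.sqrt 2) ^ n * aeval (Real.sqrt 2 * x) (hermite n) := by rw [h1, h2]; ring





def aa : ℝ := (2:ℝ) ^ ((1:ℝ)/4)

def Cc (n : ℕ) : ℝ := (Real.sqrt n.factorial)⁻¹ * (Real.sqrt 2 * Real.pi) ^ (-(1/4 : ℝ))

def Ee (y : ℝ) : ℝ := Real.exp (-(y ^ 2 / (2 * Real.sqrt 2)))

def psiR (n : ℕ) (y : ℝ) : ℝ := Cc n * (aeval (aa * y) (hermite n) * Ee y)

lemma sqrt2_pos : (0:ℝ) < Real.sqrt 2 := Real.sqrt_pos.2 (by norm_num)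

lemma aa_pos : (0:ℝ) < aa := Real.rpow_pos_of_pos (by norm_num) _

lemma aa_sq : aa ^ 2 = Real.sqrt 2 := by
  rw [aa, ← Real.rpow_natCast ((2:ℝ) ^ ((1:ℝ)/4)) 2, ← Real.rpow_mul (by norm_num)]
  rw [Real.sqrt_eq_rpow]
  norm_num

lemma s2_sq : Real.sqrt 2 ^ 2 = 2 := Real.sq_sqrt (by norm_num)

lemma osc_eq (n : ℕ) (y : ℝ) : oscEigenfun n y = ((psiR n y : ℝ) : ℂ) := by
  rw [oscEigenfun, psiR, Cc, Ee]
  norm_cast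
  rw [hermiteH_eq]
  have h1 : Real.sqrt 2 * (y / (2:ℝ) ^ ((1:ℝ)/4)) = aa * y := by
    rw [← aa_sq, aa]
    field_simp
  rw [h1]
  push_cast
  have h2 : Real.sqrt ((2:ℝ) ^ n * n.factorial) = Real.sqrt 2 ^ n * Real.sqrt n.factorial := by
    rw [Real.sqrt_mul (by positivity)]
    congr 1
    rw [show ((2:ℝ) ^ n) = ((Real.sqrt 2) ^ n) ^ 2 from by
      rw [← pow_mul, mul_comm n 2, pow_mul, s2_sq]]
    exact Real.sqrt_sq (by positivity)
  rw [h2]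
  have h3 : (Real.sqrt 2 ^ n : ℝ) ≠ 0 := by positivity
  have h4 : ((2:ℝ) ^ ((1:ℝ)/4)) = aa := rfl
  field_simp

-- derivative of the polynomial part
lemma hasDerivAt_Pa (p : Polynomial ℤ) (y : ℝ) :
    HasDerivAt (fun y : ℝ => aeval (aa * y) p) (aa * aeval (aa * y) (derivative p)) y := by
  have h1 : HasDerivAt (fun y : ℝ => aa * y) aa y := by
    simpa using (hasDerivAt_id y).const_mul aa
  have h2 := (Polynomial.hasDerivAt_aeval (q := p) (aa * y)).comp y h1
  rw [mul_comm] at h2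
  exact h2

lemma hasDerivAt_Ee (y : ℝ) :
    HasDerivAt Ee (-(y / Real.sqrt 2) * Ee y) y := by
  have h0 : HasDerivAt (fun y : ℝ => -(y ^ 2 / (2 * Real.sqrt 2)))
      (-(y / Real.sqrt 2)) y := by
    have := ((hasDerivAt_pow 2 y).div_const (2 * Real.sqrt 2)).fun_neg
    refine this.congr_deriv ?_
    have := sqrt2_pos.ne'
    field_simp
    ring
  rw [show Ee = fun y => Real.exp (-(y ^ 2 / (2 * Real.sqrt 2))) from rfl]
  simpa [Ee, mul_comm] using h0.exp

def D1 (n : ℕ) (y : ℝ) : ℝ :=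
  Cc n * (aa * aeval (aa * y) (derivative (hermite n)) * Ee y
    + aeval (aa * y) (hermite n) * (-(y / Real.sqrt 2) * Ee y))

def D2 (n : ℕ) (y : ℝ) : ℝ :=
  Cc n * ((aa * (aa * aeval (aa * y) (derivative (derivative (hermite n)))) * Ee y
      + aa * aeval (aa * y) (derivative (hermite n)) * (-(y / Real.sqrt 2) * Ee y))
    + (aa * aeval (aa * y) (derivative (hermite n)) * (-(y / Real.sqrt 2) * Ee y)
      + aeval (aa * y) (hermite n)
          * (-(1 / Real.sqrt 2) * Ee y + -(y / Real.sqrt 2) * (-(y / Real.sqrt 2) * Ee y))))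

lemma hasDerivAt_psiR (n : ℕ) (y : ℝ) : HasDerivAt (psiR n) (D1 n y) y :=
  ((hasDerivAt_Pa (hermite n) y).mul (hasDerivAt_Ee y)).const_mul (Cc n)

lemma hasDerivAt_D1 (n : ℕ) (y : ℝ) : HasDerivAt (D1 n) (D2 n y) y := by
  have h1 : HasDerivAt (fun y => aa * aeval (aa * y) (derivative (hermite n)))
      (aa * (aa * aeval (aa * y) (derivative (derivative (hermite n))))) y :=
    (hasDerivAt_Pa (derivative (hermite n)) y).const_mul aa
  have h2 : HasDerivAt (fun y : ℝ => -(y / Real.sqrt 2)) (-(1 / Real.sqrt 2)) y := by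
    simpa using ((hasDerivAt_id y).div_const (Real.sqrt 2)).fun_neg
  exact ((h1.mul (hasDerivAt_Ee y)).add
    ((hasDerivAt_Pa (hermite n) y).mul (h2.mul (hasDerivAt_Ee y)))).const_mul (Cc n)

lemma ode_real (n : ℕ) (y : ℝ) :
    -(D2 n y) + y ^ 2 / 2 * psiR n y = (Real.sqrt 2 * ((n : ℝ) + 1/2)) * psiR n y := by
  have hODE := hermite_ode_real n (aa * y)
  have hs := s2_sq
  have ha := aa_sq
  have hsne := sqrt2_pos.ne'
  rw [D2, psiR]
  set A := aeval (aa * y) (hermite n)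
  set B := aeval (aa * y) (derivative (hermite n))
  set Cd := aeval (aa * y) (derivative (derivative (hermite n)))
  set e := Ee y
  set c := Cc n
  set s := Real.sqrt 2
  have h1s : ∀ z : ℝ, z / s = z * s / 2 := by
    intro z
    rw [div_eq_div_iff hsne (by norm_num : (2:ℝ) ≠ 0)]
    linear_combination (-z) * hs
  simp only [h1s]
  linear_combination (c*e*s) * hODE + (-(c*e*A*y^2)/4) * hs + (-(c*e*Cd)) * ha



lemma contDiff_eval (q : Polynomial ℝ) : ContDiff ℝ (⊤ : ℕ∞) fun x : ℝ => q.eval x := by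
  induction q using Polynomial.induction_on' with
  | add p q hp hq => simpa [eval_add] using hp.add hq
  | monomial k c => simpa [eval_monomial] using contDiff_const.mul (contDiff_id.pow k)

lemma contDiff_aeval_comp (p : Polynomial ℤ) (b : ℝ) :
    ContDiff ℝ (⊤ : ℕ∞) fun y : ℝ => aeval (b * y) p := by
  have h : ∀ t : ℝ, aeval t p = (p.map (algebraMap ℤ ℝ)).eval t := by
    intro t; rw [aeval_def, eval_map]
  simp only [h]
  exact (contDiff_eval _).comp (contDiff_const.mul contDiff_id)

example : ContDiff ℝ (⊤ : ℕ∞) fun y : ℝ => Real.exp (-(y ^ 2 / (2 * Real.sqrt 2))) :=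
  Real.contDiff_exp.comp (((contDiff_id.pow 2).div_const _).neg)




noncomputable section

def Gg (t : ℝ) : ℝ := Real.exp (-(t ^ 2 / 2))

lemma integrable_monomial_G (k : ℕ) : Integrable fun t : ℝ => t ^ k * Gg t := by
  have h := integrable_rpow_mul_exp_neg_mul_sq (b := (1/2:ℝ)) (by norm_num)
    (s := (k:ℝ)) (lt_of_lt_of_le (by norm_num) (Nat.cast_nonneg k))
  have he : (fun x : ℝ => x ^ (k:ℝ) * Real.exp (-(1/2:ℝ) * x ^ 2))
      = fun t : ℝ => t ^ k * Gg t := by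
    funext t
    rw [Real.rpow_natCast, Gg, show -(1/2:ℝ) * t ^ 2 = -(t ^ 2 / 2) from by ring]
  rwa [he] at h

lemma integrable_PG (p : Polynomial ℝ) : Integrable fun t => p.eval t * Gg t := by
  have he : (fun t : ℝ => p.eval t * Gg t)
      = fun t => ∑ k ∈ Finset.range (p.natDegree + 1), p.coeff k * (t ^ k * Gg t) := by
    funext t
    rw [eval_eq_sum_range, Finset.sum_mul]
    congr 1; funext k; ring
  rw [he]
  exact integrable_finset_sum _ fun k _ => (integrable_monomial_G k).const_mul _

lemma hasDerivAt_PG (p : Polynomial ℝ) (t : ℝ) :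
    HasDerivAt (fun t => p.eval t * Gg t)
      ((derivative p - X * p).eval t * Gg t) t := by
  have hG : HasDerivAt Gg (-t * Gg t) t := by
    have := (((hasDerivAt_pow 2 t).div_const 2).fun_neg).exp
    refine this.congr_deriv ?_
    simp [Gg]; ring
  have := (p.hasDerivAt t).fun_mul hG
  refine this.congr_deriv ?_
  simp [eval_sub, eval_mul]
  ring

lemma tendsto_PG_atTop (p : Polynomial ℝ) :
    Tendsto (fun t => p.eval t * Gg t) atTop (nhds 0) := by
  have he : (fun t => p.eval t * Gg t)
      = fun t => (p.eval t / Real.exp t) * Real.exp (t + -(t ^ 2 / 2)) := by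
    funext t
    rw [Real.exp_add, Gg]
    field_simp
  rw [he]
  have h1 : Tendsto (fun t : ℝ => t + -(t ^ 2 / 2)) atTop atBot := by
    apply tendsto_atBot_mono (f := fun t : ℝ => 2 + -t)
    · intro t; nlinarith [sq_nonneg (t - 2)]
    · exact tendsto_atBot_add_const_left _ _ tendsto_neg_atTop_atBot
  simpa using (p.tendsto_div_exp_atTop).mul (Real.tendsto_exp_atBot.comp h1)

lemma tendsto_PG_atBot (p : Polynomial ℝ) :
    Tendsto (fun t => p.eval t * Gg t) atBot (nhds 0) := by
  have h := (tendsto_PG_atTop (p.comp (-X))).comp tendsto_neg_atBot_atTop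
  have he : ((fun t => (p.comp (-X)).eval t * Gg t) ∘ fun t : ℝ => -t)
      = fun t => p.eval t * Gg t := by
    funext t
    simp [Function.comp, eval_comp, Gg]
  rwa [he] at h

lemma integral_deriv_PG (p : Polynomial ℝ) :
    ∫ t : ℝ, (derivative p - X * p).eval t * Gg t = 0 := by
  set F := fun t : ℝ => p.eval t * Gg t
  set F' := fun t : ℝ => (derivative p - X * p).eval t * Gg t
  have hint : Integrable F' := integrable_PG _
  have h1 : ∫ t in Set.Ioi (0:ℝ), F' t = 0 - F 0 :=
    integral_Ioi_of_hasDerivAt_of_tendsto' (fun x _ => hasDerivAt_PG p x)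
      hint.integrableOn (tendsto_PG_atTop p)
  have h2 : ∫ t in Set.Iic (0:ℝ), F' t = F 0 - 0 :=
    integral_Iic_of_hasDerivAt_of_tendsto' (fun x _ => hasDerivAt_PG p x)
      hint.integrableOn (tendsto_PG_atBot p)
  have h3 := intervalIntegral.integral_Iic_add_Ioi (b := (0:ℝ)) hint.integrableOn hint.integrableOn
  rw [h1, h2] at h3
  have : integral volume F' = ∫ t : ℝ, F' t := rfl
  rw [this, ← h3]
  ring

end

noncomputable section
def Hr (n : ℕ) : Polynomial ℝ := (hermite n).map (algebraMap ℤ ℝ)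

lemma Hr_eval (n : ℕ) (t : ℝ) : (Hr n).eval t = aeval t (hermite n) := by
  rw [Hr, eval_map, ← aeval_def]

lemma deriv_iter_G (n : ℕ) (t : ℝ) :
    deriv^[n] (fun y : ℝ => Real.exp (-(y ^ 2 / 2))) t
      = (-1:ℝ) ^ n * ((Hr n).eval t * Gg t) := by
  have := Polynomial.deriv_gaussian_eq_hermite_mul_gaussian n t
  rw [Hr_eval, Gg]
  rw [this]
  ring

lemma ibp_step (p r : Polynomial ℝ) :
    ∫ t : ℝ, p.eval t * deriv (fun s => r.eval s * Gg s) t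
      = -∫ t : ℝ, (derivative p).eval t * (r.eval t * Gg t) := by
  have hd : ∀ t : ℝ, deriv (fun s => r.eval s * Gg s) t
      = (derivative r - X * r).eval t * Gg t :=
    fun t => (hasDerivAt_PG r t).deriv
  simp only [hd]
  have h0 := integral_deriv_PG (p * r)
  have hsplit : (fun t : ℝ => (derivative (p * r) - X * (p * r)).eval t * Gg t)
      = fun t => ((derivative p).eval t * (r.eval t * Gg t))
          + (p.eval t * ((derivative r - X * r).eval t * Gg t)) := by
    funext t
    simp only [derivative_mul, eval_sub, eval_mul, eval_add, eval_X]
    ring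
  rw [hsplit] at h0
  have int1 : Integrable fun t : ℝ => (derivative p).eval t * (r.eval t * Gg t) := by
    have he : (fun t : ℝ => (derivative p).eval t * (r.eval t * Gg t))
        = fun t => ((derivative p) * r).eval t * Gg t := by
      funext t; simp [eval_mul]; ring
    rw [he]; exact integrable_PG _
  have int2 : Integrable fun t : ℝ => p.eval t * ((derivative r - X * r).eval t * Gg t) := by
    have he : (fun t : ℝ => p.eval t * ((derivative r - X * r).eval t * Gg t))
        = fun t => (p * (derivative r - X * r)).eval t * Gg t := by
      funext t; simp [eval_mul]; ring
    rw [he]; exact integrable_PG _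
  rw [integral_add int1 int2] at h0
  linarith

lemma iter_ibp (n : ℕ) (p : Polynomial ℝ) :
    ∫ t : ℝ, p.eval t * deriv^[n] (fun y : ℝ => Real.exp (-(y ^ 2 / 2))) t
      = (-1:ℝ) ^ n * ∫ t : ℝ, (derivative^[n] p).eval t * Gg t := by
  induction n generalizing p with
  | zero => simp [Gg]
  | succ n ih =>
      have hsq : ((-1:ℝ) ^ n) * ((-1:ℝ) ^ n) = 1 := by
        rw [← mul_pow]; norm_num
      have hr : deriv^[n] (fun y : ℝ => Real.exp (-(y ^ 2 / 2)))
          = fun t => (C ((-1:ℝ) ^ n) * Hr n).eval t * Gg t := by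
        funext t; rw [deriv_iter_G]; simp [eval_mul]; ring
      have h1 : (fun t : ℝ => p.eval t * deriv^[n+1] (fun y : ℝ => Real.exp (-(y ^ 2 / 2))) t)
          = fun t => p.eval t * deriv (fun s => (C ((-1:ℝ) ^ n) * Hr n).eval s * Gg s) t := by
        funext t
        rw [Function.iterate_succ_apply', hr]
      rw [h1, ibp_step]
      have h2 : (fun t : ℝ => (derivative p).eval t * ((C ((-1:ℝ) ^ n) * Hr n).eval t * Gg t))
          = fun t => (derivative p).eval t * deriv^[n] (fun y : ℝ => Real.exp (-(y ^ 2 / 2))) t := by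
        funext t; rw [hr]
      rw [h2, ih (derivative p), ← Function.iterate_succ_apply]
      rw [pow_succ]
      ring

lemma ortho_core (m n : ℕ) :
    ∫ t : ℝ, (Hr m).eval t * ((Hr n).eval t * Gg t)
      = ∫ t : ℝ, (derivative^[n] (Hr m)).eval t * Gg t := by
  have hsq : ((-1:ℝ) ^ n) * ((-1:ℝ) ^ n) = 1 := by rw [← mul_pow]; norm_num
  have h1 : (fun t : ℝ => (Hr m).eval t * ((Hr n).eval t * Gg t))
      = fun t => (-1:ℝ) ^ n * ((Hr m).eval t * deriv^[n] (fun y : ℝ => Real.exp (-(y ^ 2 / 2))) t) := by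
    funext t
    rw [deriv_iter_G]
    linear_combination (-((Hr m).eval t * ((Hr n).eval t * Gg t))) * hsq
  rw [h1, integral_const_mul, iter_ibp, ← mul_assoc, hsq, one_mul]

lemma Hr_natDegree (n : ℕ) : (Hr n).natDegree = n := by
  rw [Hr, (hermite_monic n).natDegree_map, natDegree_hermite]

lemma iter_deriv_Hr_self (n : ℕ) : derivative^[n] (Hr n) = C ((n.factorial : ℝ)) := by
  have h0 : (derivative^[n] (Hr n)).natDegree = 0 := by
    have := natDegree_iterate_derivative (Hr n) n
    rw [Hr_natDegree] at this
    omega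
  have hc := Polynomial.eq_C_of_natDegree_le_zero (le_of_eq h0)
  rw [hc, coeff_iterate_derivative]
  congr 1
  have : (Hr n).coeff (0 + n) = 1 := by
    simp [Hr, coeff_map, coeff_hermite_self]
  rw [this, Nat.zero_add, Nat.descFactorial_self]
  simp

lemma integral_Gg : ∫ t : ℝ, Gg t = Real.sqrt (2 * Real.pi) := by
  have := integral_gaussian (1/2)
  have he : (fun x : ℝ => Real.exp (-(1/2:ℝ) * x ^ 2)) = Gg := by
    funext t; rw [Gg]; congr 1; ring
  rw [he] at this
  rw [this]
  congr 1
  rw [div_div_eq_mul_div, div_one, mul_comm]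

lemma ortho_herm (m n : ℕ) :
    ∫ t : ℝ, (Hr m).eval t * ((Hr n).eval t * Gg t)
      = if m = n then (n.factorial : ℝ) * Real.sqrt (2 * Real.pi) else 0 := by
  rcases lt_trichotomy m n with h | h | h
  · rw [ortho_core, if_neg h.ne]
    have hz : derivative^[n] (Hr m) = 0 :=
      iterate_derivative_eq_zero (by rw [Hr_natDegree]; exact h)
    simp [hz]
  · subst h
    rw [ortho_core, iter_deriv_Hr_self, if_pos rfl]
    simp only [eval_C]
    rw [integral_const_mul, integral_Gg]
  · rw [if_neg h.ne']
    have hcomm : (fun t : ℝ => (Hr m).eval t * ((Hr n).eval t * Gg t))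
        = fun t => (Hr n).eval t * ((Hr m).eval t * Gg t) := by
      funext t; ring
    rw [hcomm, ortho_core]
    have hz : derivative^[m] (Hr n) = 0 :=
      iterate_derivative_eq_zero (by rw [Hr_natDegree]; exact h)
    simp [hz]
end


lemma contDiff_psiR (n : ℕ) : ContDiff ℝ (⊤ : ℕ∞) (psiR n) :=
  contDiff_const.mul ((contDiff_aeval_comp (hermite n) aa).mul
    (Real.contDiff_exp.comp (((contDiff_id.pow 2).div_const _).neg)))

lemma Ee_sq (y : ℝ) : Ee y * Ee y = Gg (aa * y) := by
  rw [Ee, Gg, ← Real.exp_add]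
  congr 1
  rw [mul_pow, aa_sq]
  have hs := s2_sq
  have hne := sqrt2_pos.ne'
  field_simp
  linear_combination y ^ 2 * hs

lemma psiR_prod (m n : ℕ) (y : ℝ) :
    psiR m y * psiR n y
      = (Cc m * Cc n) * ((Hr m).eval (aa * y) * ((Hr n).eval (aa * y) * Gg (aa * y))) := by
  rw [psiR, psiR, Hr_eval, Hr_eval, ← Ee_sq]
  ring

lemma aux_const : ((Real.sqrt 2 * Real.pi) ^ (-(1/4 : ℝ))) ^ 2
    * (aa⁻¹ * Real.sqrt (2 * Real.pi)) = 1 := by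
  have hpi := Real.pi_pos
  have h2 : (0:ℝ) ≤ 2 := by norm_num
  have hs2 : Real.sqrt 2 = (2:ℝ) ^ ((1:ℝ)/2) := Real.sqrt_eq_rpow 2
  have hsq : ((Real.sqrt 2 * Real.pi) ^ (-(1/4 : ℝ))) ^ 2
      = (Real.sqrt 2 * Real.pi) ^ (-(1/2 : ℝ)) := by
    rw [← Real.rpow_natCast ((Real.sqrt 2 * Real.pi) ^ (-(1/4 : ℝ))) 2,
      ← Real.rpow_mul (by positivity)]
    norm_num
  rw [hsq, Real.mul_rpow (Real.sqrt_nonneg 2) hpi.le, hs2,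
    ← Real.rpow_mul h2, Real.sqrt_eq_rpow,
    Real.mul_rpow h2 hpi.le, aa, ← Real.rpow_neg h2]
  rw [show ((2:ℝ) ^ ((1:ℝ)/2 * -(1/2)) * Real.pi ^ (-(1/2):ℝ))
        * ((2:ℝ) ^ (-((1:ℝ)/4)) * ((2:ℝ) ^ ((1:ℝ)/2) * Real.pi ^ ((1:ℝ)/2)))
      = (((2:ℝ) ^ ((1:ℝ)/2 * -(1/2)) * (2:ℝ) ^ (-((1:ℝ)/4))) * (2:ℝ) ^ ((1:ℝ)/2))
        * (Real.pi ^ (-(1/2):ℝ) * Real.pi ^ ((1:ℝ)/2)) from by ring,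
    ← Real.rpow_add (by norm_num : (0:ℝ) < 2), ← Real.rpow_add (by norm_num : (0:ℝ) < 2),
    ← Real.rpow_add hpi]
  norm_num

lemma psiR_orthonormal (m n : ℕ) :
    ∫ y : ℝ, psiR m y * psiR n y = if m = n then 1 else 0 := by
  have h1 : (fun y : ℝ => psiR m y * psiR n y)
      = fun y => (Cc m * Cc n)
          * ((Hr m).eval (aa * y) * ((Hr n).eval (aa * y) * Gg (aa * y))) :=
    funext (psiR_prod m n)
  rw [h1, MeasureTheory.integral_const_mul,
    MeasureTheory.Measure.integral_comp_mul_left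
      (fun t => (Hr m).eval t * ((Hr n).eval t * Gg t)) aa,
    ortho_herm, smul_eq_mul, abs_of_pos (inv_pos.2 aa_pos)]
  by_cases h : m = n
  · subst h
    rw [if_pos rfl, if_pos rfl]
    have hfac : (0:ℝ) < (m.factorial : ℝ) := by
      exact_mod_cast m.factorial_pos
    have hsne : Real.sqrt (m.factorial : ℝ) ≠ 0 := by positivity
    have hss : Real.sqrt (m.factorial : ℝ) * Real.sqrt (m.factorial : ℝ)
        = (m.factorial : ℝ) := Real.mul_self_sqrt hfac.le
    have hc : Cc m * Cc m * (aa⁻¹ * ((m.factorial : ℝ) * Real.sqrt (2 * Real.pi)))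
        = (((Real.sqrt (m.factorial : ℝ))⁻¹ * (Real.sqrt (m.factorial : ℝ))⁻¹
              * (m.factorial : ℝ)))
          * (((Real.sqrt 2 * Real.pi) ^ (-(1/4 : ℝ))) ^ 2
              * (aa⁻¹ * Real.sqrt (2 * Real.pi))) := by
      rw [Cc]; ring
    rw [hc, aux_const]
    field_simp
    exact (Real.sq_sqrt hfac.le).symm
  · rw [if_neg h, if_neg h]
    ring

end Aux

/-- The functions `ψ_n` are smooth, satisfy the eigenvalue equation
`-ψ_n'' + (y²/2) ψ_n = √2 (n + 1/2) ψ_n`, and form an orthonormal family in `L²(ℝ, ℂ)`. -/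
theorem oscillator_eigenfunctions :
    (∀ n : ℕ, ContDiff ℝ (⊤ : ℕ∞) (oscEigenfun n)) ∧
    (∀ (n : ℕ) (y : ℝ),
      -(deriv (deriv (oscEigenfun n)) y) + ((y : ℂ) ^ 2 / 2) * oscEigenfun n y
        = ((Real.sqrt 2 : ℂ) * ((n : ℂ) + 1/2)) * oscEigenfun n y) ∧
    (∀ m n : ℕ,
      ∫ y : ℝ, starRingEnd ℂ (oscEigenfun m y) * oscEigenfun n y
        = if m = n then 1 else 0) := by
  refine ⟨fun n => ?_, fun n y => ?_, fun m n => ?_⟩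
  · rw [show oscEigenfun n = fun y => ((psiR n y : ℝ) : ℂ) from funext (osc_eq n)]
    exact Complex.ofRealCLM.contDiff.comp (contDiff_psiR n)
  · have hosc : oscEigenfun n = fun y => ((psiR n y : ℝ) : ℂ) := funext (osc_eq n)
    have hd1 : deriv (oscEigenfun n) = fun z => ((D1 n z : ℝ) : ℂ) := by
      funext z
      rw [hosc]
      exact ((hasDerivAt_psiR n z).ofReal_comp).deriv
    have hd2 : deriv (deriv (oscEigenfun n)) y = ((D2 n y : ℝ) : ℂ) := by
      rw [hd1]
      exact ((hasDerivAt_D1 n y).ofReal_comp).deriv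
    rw [hd2, hosc]
    calc -((D2 n y : ℝ) : ℂ) + (y : ℂ) ^ 2 / 2 * ((psiR n y : ℝ) : ℂ)
        = ((-(D2 n y) + y ^ 2 / 2 * psiR n y : ℝ) : ℂ) := by push_cast; ring
      _ = ((Real.sqrt 2 * ((n : ℝ) + 1/2) * psiR n y : ℝ) : ℂ) := by rw [ode_real]
      _ = ((Real.sqrt 2 : ℂ) * ((n : ℂ) + 1/2)) * ((psiR n y : ℝ) : ℂ) := by
          push_cast; ring
  · have hcalc : ∀ y : ℝ, starRingEnd ℂ (oscEigenfun m y) * oscEigenfun n y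
        = ((psiR m y * psiR n y : ℝ) : ℂ) := by
      intro y
      rw [osc_eq, osc_eq, Complex.conj_ofReal]
      push_cast
      ring
    rw [show (fun y : ℝ => starRingEnd ℂ (oscEigenfun m y) * oscEigenfun n y)
        = fun y : ℝ => ((psiR m y * psiR n y : ℝ) : ℂ) from funext hcalc]
    rw [show (∫ y : ℝ, ((psiR m y * psiR n y : ℝ) : ℂ))
        = ((∫ y : ℝ, psiR m y * psiR n y : ℝ) : ℂ) from integral_ofReal, psiR_orthonormal]
    split <;> norm_num

end
end

section
/- Let μ ∈ ℝ and let c₀ : ℝ → ℂ be a Schwartz function. Define c(t,x) = (4πit)^{-1/2} e^{-iμt} ∫_ℝ e^{i(x-v)²/(4t)} c₀(v) dv for t > 0 and x ∈ ℝ, where (4πit)^{-1/2} is the principal branch of the square root. Then c is differentiable in t and twice differentiable in x on (0,∞) × ℝ, and satisfies i ∂c/∂t (t,x) = - ∂²c/∂x² (t,x) + μ c(t,x) for all t > 0 and x ∈ ℝ. -/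
open MeasureTheory

noncomputable section

/-!
With `K(t,x,v) = exp (i (x-v)² / (4t))` and `L = ∂ₓ log K = i (x-v) / (2t)`, one has
`∂ₓ K = L K`, `∂ₓ² K = (i/(2t) + L²) K` and `∂ₜ K = i L² K`, so the kernel itself satisfies
`i ∂ₜ K = -∂ₓ² K + (i/(2t)) K`. These derivatives grow at most quadratically in `v`, which the
Schwartz decay of `c₀` dominates, so they may be taken under the integral. The prefactor
`(4πit)^{-1/2} e^{-iμt}` has logarithmic derivative `-1/(2t) - iμ`: its first term cancels the
extra `i/(2t)` and its second produces the potential term `μ c`.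
-/

open Complex Filter Metric Topology
open scoped SchwartzMap

section SchwartzIntegral

variable {D : Type*} [NormedAddCommGroup D] [NormedSpace ℝ D] [MeasurableSpace D] [BorelSpace D]
  [SecondCountableTopology D] {μ : Measure D} [μ.HasTemperateGrowth]

theorem SchwartzMap.integrable_one_add_norm_pow_mul {V : Type*} [NormedAddCommGroup V]
    [NormedSpace ℝ V] (f : 𝓢(D, V)) (k : ℕ) :
    Integrable (fun v ↦ (1 + ‖v‖) ^ k * ‖f v‖) μ := by
  refine (((f.integrable_pow_mul μ 0).add (f.integrable_pow_mul μ k)).const_mul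
    (2 ^ (k - 1))).mono' (by fun_prop) (ae_of_all _ fun v ↦ ?_)
  have h := add_pow_le zero_le_one (norm_nonneg v) k
  rw [one_pow] at h
  rw [norm_mul, norm_pow, norm_norm, Real.norm_of_nonneg (by positivity)]
  simp only [pow_zero, one_mul, Pi.add_apply]
  nlinarith [norm_nonneg (f v)]

theorem integrable_mul_schwartz_of_norm_le (f : 𝓢(D, ℂ)) {g : D → ℂ}
    (hg : AEStronglyMeasurable g μ) (C : ℝ) (k : ℕ) (hle : ∀ v, ‖g v‖ ≤ C * (1 + ‖v‖) ^ k) :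
    Integrable (fun v ↦ g v * f v) μ := by
  refine ((f.integrable_one_add_norm_pow_mul k).const_mul C).mono'
    (hg.mul f.continuous.aestronglyMeasurable) (ae_of_all _ fun v ↦ ?_)
  rw [norm_mul, ← mul_assoc]
  exact mul_le_mul_of_nonneg_right (hle v) (norm_nonneg _)

theorem hasDerivAt_integral_mul_schwartz (f : 𝓢(D, ℂ)) {F F' : ℝ → D → ℂ} {x₀ : ℝ}
    {s : Set ℝ} (hs : s ∈ 𝓝 x₀) (hF : ∀ x, Continuous (F x))
    (hF_int : Integrable (fun v ↦ F x₀ v * f v) μ) (hF' : Continuous (F' x₀)) (C : ℝ) (k : ℕ)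
    (h_bound : ∀ x ∈ s, ∀ v, ‖F' x v‖ ≤ C * (1 + ‖v‖) ^ k)
    (h_diff : ∀ x ∈ s, ∀ v, HasDerivAt (F · v) (F' x v) x) :
    HasDerivAt (fun x ↦ ∫ v, F x v * f v ∂μ) (∫ v, F' x₀ v * f v ∂μ) x₀ := by
  refine (hasDerivAt_integral_of_dominated_loc_of_deriv_le hs
    (Eventually.of_forall fun x ↦ ((hF x).mul f.continuous).aestronglyMeasurable) hF_int
    (hF'.mul f.continuous).aestronglyMeasurable
    (bound := fun v ↦ C * ((1 + ‖v‖) ^ k * ‖f v‖))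
    (ae_of_all _ fun v x hx ↦ ?_) ((f.integrable_one_add_norm_pow_mul k).const_mul C)
    (ae_of_all _ fun v x hx ↦ (h_diff x hx v).mul_const (f v))).2
  rw [norm_mul, ← mul_assoc]
  exact mul_le_mul_of_nonneg_right (h_bound x hx v) (norm_nonneg _)

end SchwartzIntegral

theorem hasDerivAt_mul_ofReal_cpow {a r : ℂ} {t : ℝ} (h : a * t ∈ slitPlane) :
    HasDerivAt (fun s : ℝ ↦ (a * s) ^ r) (r / t * (a * t) ^ r) t := by
  have hat : a * t ≠ 0 := slitPlane_ne_zero h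
  have ha : a ≠ 0 := left_ne_zero_of_mul hat
  have ht : (t : ℂ) ≠ 0 := right_ne_zero_of_mul hat
  convert (((hasDerivAt_id (t : ℂ)).const_mul a).cpow_const (c := r) (by simpa using h)).comp_ofReal
    using 1
  · rfl
  rw [id, cpow_sub _ _ hat, cpow_one]
  field_simp

def fresnelPrefactor (μ t : ℝ) : ℂ :=
  (4 * (Real.pi : ℂ) * I * (t : ℂ)) ^ (-(1 / 2 : ℂ)) * exp (-(I * (μ : ℂ) * (t : ℂ)))

theorem hasDerivAt_fresnelPrefactor (μ : ℝ) {t : ℝ} (ht : t ≠ 0) :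
    HasDerivAt (fresnelPrefactor μ) (fresnelPrefactor μ t * (-(1 / (2 * t)) - I * μ)) t := by
  have hslit : 4 * (Real.pi : ℂ) * I * t ∈ slitPlane := by
    simp [mem_slitPlane_iff, ht, Real.pi_ne_zero]
  have hexp : HasDerivAt (fun s : ℝ ↦ exp (-(I * μ * s))) (-(I * μ) * exp (-(I * μ * t))) t := by
    simpa [mul_comm] using ((hasDerivAt_id (t : ℂ)).const_mul (-(I * μ))).cexp.comp_ofReal
  exact ((hasDerivAt_mul_ofReal_cpow hslit).fun_mul hexp).congr_deriv
    (by unfold fresnelPrefactor; ring)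

def fresnelKernel (t x v : ℝ) : ℂ := exp (I * ((x : ℂ) - v) ^ 2 / (4 * t))

def fresnelLogDeriv (t x v : ℝ) : ℂ := I * ((x : ℂ) - v) / (2 * t)

theorem norm_fresnelKernel (t x v : ℝ) : ‖fresnelKernel t x v‖ = 1 := by
  have h : I * ((x : ℂ) - v) ^ 2 / (4 * t) = (((x - v) ^ 2 / (4 * t) : ℝ) : ℂ) * I := by
    push_cast; ring
  rw [fresnelKernel, h, norm_exp_ofReal_mul_I]

@[fun_prop]
theorem continuous_fresnelKernel (t x : ℝ) : Continuous fun v ↦ fresnelKernel t x v := by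
  unfold fresnelKernel; fun_prop

@[fun_prop]
theorem continuous_fresnelLogDeriv (t x : ℝ) : Continuous fun v ↦ fresnelLogDeriv t x v := by
  unfold fresnelLogDeriv; fun_prop

theorem hasDerivAt_fresnelKernel_x (t x v : ℝ) :
    HasDerivAt (fun y ↦ fresnelKernel t y v) (fresnelLogDeriv t x v * fresnelKernel t x v) x := by
  have h : HasDerivAt (fun y : ℂ ↦ (y - v) ^ 2) (2 * ((x : ℂ) - v)) x := by
    simpa using ((hasDerivAt_id (x : ℂ)).sub_const (v : ℂ)).fun_pow 2
  unfold fresnelKernel fresnelLogDeriv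
  exact (((h.const_mul I).div_const (4 * (t : ℂ))).cexp).comp_ofReal.congr_deriv (by ring)

theorem hasDerivAt_fresnelLogDeriv_mul_fresnelKernel (t x v : ℝ) :
    HasDerivAt (fun y ↦ fresnelLogDeriv t y v * fresnelKernel t y v)
      ((I / (2 * t) + fresnelLogDeriv t x v ^ 2) * fresnelKernel t x v) x := by
  have h : HasDerivAt (fun y : ℂ ↦ I * (y - v) / (2 * t)) (I / (2 * t)) x := by
    simpa using (((hasDerivAt_id (x : ℂ)).sub_const (v : ℂ)).const_mul I).div_const (2 * (t : ℂ))
  exact (h.comp_ofReal.fun_mul (hasDerivAt_fresnelKernel_x t x v)).congr_deriv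
    (by unfold fresnelLogDeriv; ring)

theorem hasDerivAt_fresnelKernel_t {t : ℝ} (ht : t ≠ 0) (x v : ℝ) :
    HasDerivAt (fun s ↦ fresnelKernel s x v)
      (I * fresnelLogDeriv t x v ^ 2 * fresnelKernel t x v) t := by
  have h := (hasDerivAt_inv (ofReal_ne_zero.2 ht)).comp_ofReal.const_mul (I * ((x : ℂ) - v) ^ 2 / 4)
  have e (s : ℝ) : I * ((x : ℂ) - v) ^ 2 / (4 * s) = I * ((x : ℂ) - v) ^ 2 / 4 * (s : ℂ)⁻¹ := by
    ring
  simp only [fresnelKernel, fresnelLogDeriv, e]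
  exact h.cexp.congr_deriv (by
    linear_combination (I * ((x : ℂ) - v) ^ 2 / 4 * -((t : ℂ) ^ 2)⁻¹ *
      exp (I * ((x : ℂ) - v) ^ 2 / 4 * (t : ℂ)⁻¹)) * I_sq)

theorem norm_fresnelLogDeriv (t u v : ℝ) : ‖fresnelLogDeriv t u v‖ = ‖u - v‖ / (2 * ‖t‖) := by
  simp [fresnelLogDeriv, ← ofReal_sub, Complex.norm_real]

theorem norm_fresnelLogDeriv_le {t u a : ℝ} (hu : ‖u‖ ≤ a) (v : ℝ) :
    ‖fresnelLogDeriv t u v‖ ≤ (1 + a) / (2 * ‖t‖) * (1 + ‖v‖) := by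
  rw [norm_fresnelLogDeriv, div_mul_eq_mul_div]
  gcongr
  nlinarith [norm_sub_le u v, norm_nonneg u, norm_nonneg v]

theorem norm_fresnelLogDeriv_mul_fresnelKernel_le {t u a : ℝ} (hu : ‖u‖ ≤ a) (v : ℝ) :
    ‖fresnelLogDeriv t u v * fresnelKernel t u v‖ ≤ (1 + a) / (2 * ‖t‖) * (1 + ‖v‖) ^ 1 := by
  rw [norm_mul, norm_fresnelKernel, mul_one, pow_one]
  exact norm_fresnelLogDeriv_le hu v

theorem norm_add_fresnelLogDeriv_sq_mul_fresnelKernel_le {t u a : ℝ} (hu : ‖u‖ ≤ a) (v : ℝ) :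
    ‖(I / (2 * t) + fresnelLogDeriv t u v ^ 2) * fresnelKernel t u v‖ ≤
      (1 / (2 * ‖t‖) + ((1 + a) / (2 * ‖t‖)) ^ 2) * (1 + ‖v‖) ^ 2 := by
  have hv : 1 ≤ (1 + ‖v‖) ^ 2 := one_le_pow₀ (by linarith [norm_nonneg v])
  rw [norm_mul, norm_fresnelKernel, mul_one]
  calc _ ≤ ‖I / (2 * (t : ℂ))‖ + ‖fresnelLogDeriv t u v ^ 2‖ := norm_add_le _ _
    _ ≤ 1 / (2 * ‖t‖) * (1 + ‖v‖) ^ 2 + ((1 + a) / (2 * ‖t‖) * (1 + ‖v‖)) ^ 2 := by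
        rw [norm_pow]
        gcongr
        · simpa using le_mul_of_one_le_right (by positivity) hv
        · exact norm_fresnelLogDeriv_le hu v
    _ = _ := by ring

theorem norm_I_mul_fresnelLogDeriv_sq_mul_fresnelKernel_le {t s : ℝ} (ht : t ≠ 0)
    (hs : ‖t‖ ≤ 2 * ‖s‖) (x v : ℝ) :
    ‖I * fresnelLogDeriv s x v ^ 2 * fresnelKernel s x v‖ ≤
      ((1 + ‖x‖) / ‖t‖) ^ 2 * (1 + ‖v‖) ^ 2 := by
  rw [norm_mul, norm_mul, norm_fresnelKernel, norm_I, one_mul, mul_one, norm_pow, ← mul_pow]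
  gcongr
  refine (norm_fresnelLogDeriv_le le_rfl v).trans ?_
  gcongr

theorem integrable_fresnelKernel_mul (f : 𝓢(ℝ, ℂ)) (t x : ℝ) :
    Integrable fun v ↦ fresnelKernel t x v * f v :=
  integrable_mul_schwartz_of_norm_le f (by fun_prop) 1 0 fun v ↦ by simp [norm_fresnelKernel]

theorem hasDerivAt_integral_fresnelKernel_mul_x (f : 𝓢(ℝ, ℂ)) (t x : ℝ) :
    HasDerivAt (fun y ↦ ∫ v, fresnelKernel t y v * f v)
      (∫ v, fresnelLogDeriv t x v * fresnelKernel t x v * f v) x :=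
  hasDerivAt_integral_mul_schwartz f (closedBall_mem_nhds x one_pos)
    (fun y ↦ continuous_fresnelKernel t y) (integrable_fresnelKernel_mul f t x) (by fun_prop) _ 1
    (fun _ hu ↦ norm_fresnelLogDeriv_mul_fresnelKernel_le (norm_le_of_mem_closedBall hu))
    (fun u _ v ↦ hasDerivAt_fresnelKernel_x t u v)

theorem hasDerivAt_integral_fresnelLogDeriv_mul_x (f : 𝓢(ℝ, ℂ)) (t x : ℝ) :
    HasDerivAt (fun y ↦ ∫ v, fresnelLogDeriv t y v * fresnelKernel t y v * f v)
      (∫ v, (I / (2 * t) + fresnelLogDeriv t x v ^ 2) * fresnelKernel t x v * f v) x :=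
  hasDerivAt_integral_mul_schwartz f (closedBall_mem_nhds x one_pos) (fun y ↦ by fun_prop)
    (integrable_mul_schwartz_of_norm_le f (by fun_prop) _ 1
      (norm_fresnelLogDeriv_mul_fresnelKernel_le le_rfl))
    (by fun_prop) _ 2
    (fun _ hu ↦ norm_add_fresnelLogDeriv_sq_mul_fresnelKernel_le (norm_le_of_mem_closedBall hu))
    (fun u _ v ↦ hasDerivAt_fresnelLogDeriv_mul_fresnelKernel t u v)

theorem hasDerivAt_integral_fresnelKernel_mul_t (f : 𝓢(ℝ, ℂ)) {t : ℝ} (ht : t ≠ 0) (x : ℝ) :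
    HasDerivAt (fun s ↦ ∫ v, fresnelKernel s x v * f v)
      (∫ v, I * fresnelLogDeriv t x v ^ 2 * fresnelKernel t x v * f v) t := by
  have hball : ∀ s ∈ closedBall t (‖t‖ / 2), ‖t‖ ≤ 2 * ‖s‖ := fun s hs ↦ by
    linarith [norm_le_of_mem_closedBall (mem_closedBall_comm.1 hs)]
  refine hasDerivAt_integral_mul_schwartz f (closedBall_mem_nhds t (by positivity))
    (fun s ↦ continuous_fresnelKernel s x) (integrable_fresnelKernel_mul f t x) (by fun_prop) _ 2
    (fun s hs ↦ norm_I_mul_fresnelLogDeriv_sq_mul_fresnelKernel_le ht (hball s hs) x)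
    (fun s hs v ↦ hasDerivAt_fresnelKernel_t ?_ x v)
  rintro rfl
  simpa [ht] using hball 0 hs

theorem I_mul_integral_fresnelKernel_t_eq (f : 𝓢(ℝ, ℂ)) {t : ℝ} (ht : t ≠ 0) (x : ℝ) :
    I * ∫ v, I * fresnelLogDeriv t x v ^ 2 * fresnelKernel t x v * f v =
      -(∫ v, (I / (2 * t) + fresnelLogDeriv t x v ^ 2) * fresnelKernel t x v * f v) +
        I / (2 * t) * ∫ v, fresnelKernel t x v * f v := by
  have hK := integrable_fresnelKernel_mul f t x
  have hKt : Integrable fun v ↦ I * fresnelLogDeriv t x v ^ 2 * fresnelKernel t x v * f v :=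
    integrable_mul_schwartz_of_norm_le f (by fun_prop) _ 2
      (norm_I_mul_fresnelLogDeriv_sq_mul_fresnelKernel_le ht (by linarith [norm_nonneg t]) x)
  have hsplit (v : ℝ) : (I / (2 * t) + fresnelLogDeriv t x v ^ 2) * fresnelKernel t x v * f v =
      I / (2 * t) * (fresnelKernel t x v * f v) +
        -I * (I * fresnelLogDeriv t x v ^ 2 * fresnelKernel t x v * f v) := by
    linear_combination fresnelLogDeriv t x v ^ 2 * fresnelKernel t x v * f v * I_sq
  simp_rw [hsplit]
  rw [integral_add (hK.const_mul (I / (2 * t))) (hKt.const_mul (-I)), integral_const_mul,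
    integral_const_mul]
  ring

/-- The Fresnel-integral representation
`c(t,x) = (4πit)^{-1/2} e^{-iμt} ∫_ℝ e^{i(x-v)²/(4t)} c₀(v) dv`
(principal branch of the square root) of the solution of the free Schrödinger equation
with constant potential `μ`: for `t > 0` it is differentiable in `t`, twice differentiable
in `x`, and satisfies `i ∂c/∂t = -∂²c/∂x² + μ c`. -/
theorem fresnel_solves_free_schrodinger (μ : ℝ) (c₀ : SchwartzMap ℝ ℂ)
    (c : ℝ → ℝ → ℂ)
    (hc : ∀ t x : ℝ, c t x =
      (4 * (Real.pi : ℂ) * Complex.I * (t : ℂ)) ^ (-(1/2 : ℂ)) *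
        Complex.exp (-(Complex.I * (μ : ℂ) * (t : ℂ))) *
        ∫ v : ℝ, Complex.exp (Complex.I * ((x : ℂ) - (v : ℂ)) ^ 2 / (4 * (t : ℂ))) * c₀ v) :
    ∀ t : ℝ, 0 < t → ∀ x : ℝ,
      DifferentiableAt ℝ (fun s : ℝ => c s x) t ∧
      DifferentiableAt ℝ (fun u : ℝ => c t u) x ∧
      DifferentiableAt ℝ (deriv (fun u : ℝ => c t u)) x ∧
      Complex.I * deriv (fun s : ℝ => c s x) t
        = -(deriv (deriv (fun u : ℝ => c t u)) x) + (μ : ℂ) * c t x := by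
  intro t ht x
  obtain rfl : c = fun s y ↦ fresnelPrefactor μ s * ∫ v, fresnelKernel s y v * c₀ v :=
    funext₂ hc
  beta_reduce
  have h_t := (hasDerivAt_fresnelPrefactor μ ht.ne').fun_mul
    (hasDerivAt_integral_fresnelKernel_mul_t c₀ ht.ne' x)
  have h_x (y : ℝ) := (hasDerivAt_integral_fresnelKernel_mul_x c₀ t y).const_mul
    (fresnelPrefactor μ t)
  have h_xx : HasDerivAt (deriv fun y ↦ fresnelPrefactor μ t * ∫ v, fresnelKernel t y v * c₀ v)
      (fresnelPrefactor μ t * ∫ v, (I / (2 * t) + fresnelLogDeriv t x v ^ 2) *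
        fresnelKernel t x v * c₀ v) x := by
    rw [funext fun y ↦ (h_x y).deriv]
    exact (hasDerivAt_integral_fresnelLogDeriv_mul_x c₀ t x).const_mul _
  refine ⟨h_t.differentiableAt, (h_x x).differentiableAt, h_xx.differentiableAt, ?_⟩
  rw [h_t.deriv, h_xx.deriv]
  linear_combination fresnelPrefactor μ t * I_mul_integral_fresnelKernel_t_eq c₀ ht.ne' x -
    μ * fresnelPrefactor μ t * (∫ v, fresnelKernel t x v * c₀ v) * I_sq
end
end
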